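/- The multiset Eulerian polynomial is invariant under permuting the multiplicities: for any 𝐦 = (m_1,...,m_n) and any permutation σ of {1,...,n}, A_{(m_1,...,m_n)}(x) = A_{(m_{σ(1)},...,m_{σ(n)})}(x). -/

import Mathlib

open MvPolynomial

/-- Number of descents in `a :: rest`, counting consecutive pairs. -/
def desAux : List ℕ → ℕ
  | a :: b :: t => (if b < a then 1 else 0) + desAux (b :: t)
  | _ => 0

/-- The descent number of a word `w = π₁…π_m`, with the boundary convention
`π₀ = π_{m+1} = 0`. -/
def des (w : List ℕ) : ℕ := desAux (0 :: (w ++ [0]))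

/-- The list of all distinct arrangements (multipermutations) of a multiset. -/
noncomputable def arrangements (M : Multiset ℕ) : List (List ℕ) :=
  M.toList.permutations.dedup

/-- The multiset `{1^{m₁}, 2^{m₂}, …, n^{m_n}}` encoded by the list of
multiplicities `ms = [m₁, …, m_n]`. -/
def msetOf (ms : List ℕ) : Multiset ℕ :=
  ((List.range ms.length).flatMap fun i => List.replicate (ms.getD i 0) (i + 1) : List ℕ)

/-- The homogenized multiset Eulerian polynomial
`A_𝐦(x,y) = Σ_π x^{des π} y^{m+1-des π}`. -/
noncomputable def Abi (ms : List ℕ) : MvPolynomial (Fin 2) ℚ :=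
  ((arrangements (msetOf ms)).map fun w =>
    X 0 ^ des w * X 1 ^ ((msetOf ms).card + 1 - des w)).sum

/-- The multiset Eulerian polynomial `A_𝐦(x) = Σ_π x^{des π}`. -/
noncomputable def Auni (ms : List ℕ) : Polynomial ℚ :=
  ((arrangements (msetOf ms)).map fun w => Polynomial.X ^ des w).sum

/-!
Exchanging two adjacent multiplicities `mᵢ, mᵢ₊₁` amounts to exchanging the letters `v = i + 1` and
`v + 1` in the multiset. In a word, reverse every maximal factor with letters in `{v, v + 1}` and
swap `v ↔ v + 1` inside it. This is an involution that changes the content by the swap. It also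
keeps the number of descents: inside a factor a descent `v + 1, v` is sent to a descent
`v + 1, v`, and a neighbour `c ∉ {v, v + 1}` of a factor (including the boundary `0`, as `v ≥ 1`)
compares the same way with `v` and with `v + 1`. Hence it maps the arrangements of one multiset
bijectively and descent-preservingly onto those of the other, and any permutation of the
multiplicities is a product of adjacent transpositions.
-/

theorem List.induction_on_runs {α : Type*} (p : α → Prop) [DecidablePred p]
    {motive : List α → Prop} (run : ∀ r, (∀ x ∈ r, p x) → motive r)
    (append_cons : ∀ r c t, (∀ x ∈ r, p x) → ¬ p c → motive t → motive (r ++ c :: t))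
    (w : List α) : motive w := by
  suffices h : ∀ r, (∀ x ∈ r, p x) → motive (r ++ w) from h [] (by simp)
  induction w with
  | nil => simpa using run
  | cons c t ih =>
    intro r hr
    by_cases hc : p c
    · simpa using ih (r ++ [c]) (by simpa [or_imp, forall_and] using ⟨hr, hc⟩)
    · exact append_cons r c t hr hc (by simpa using ih [] (by simp))

theorem desAux_append (l₁ : List ℕ) (a : ℕ) (l₂ : List ℕ) :
    desAux (l₁ ++ a :: l₂) = desAux (l₁ ++ [a]) + desAux (a :: l₂) := by
  match l₁ with
  | [] => simp [desAux]
  | [x] => simp [desAux]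
  | x :: y :: t =>
    simp only [List.cons_append, desAux]
    rw [← List.cons_append, desAux_append (y :: t), List.cons_append]
    omega

theorem desAux_append_pair (l : List ℕ) (a b : ℕ) :
    desAux (l ++ [a, b]) = desAux (l ++ [a]) + if b < a then 1 else 0 := by
  rw [desAux_append]; rfl

theorem desAux_reverse_map {f : ℕ → ℕ} :
    ∀ {r : List ℕ}, (∀ x ∈ r, ∀ y ∈ r, f x < f y ↔ y < x) → desAux (r.map f).reverse = desAux r
  | [], _ | [_], _ => rfl
  | x :: y :: t, hf => by
    have ih := desAux_reverse_map (r := y :: t) fun a ha b hb =>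
      hf a (List.mem_cons_of_mem _ ha) b (List.mem_cons_of_mem _ hb)
    simp only [List.map_cons, List.reverse_cons, List.append_assoc, List.singleton_append] at ih ⊢
    rw [desAux_append_pair, ih, if_congr (hf x (by simp) y (by simp)) rfl rfl, desAux]
    omega

section FlipRuns

variable (v : ℕ)

def revSwap (r : List ℕ) : List ℕ := (r.map (Equiv.swap v (v + 1))).reverse

/- `flipRuns v w` applies `revSwap v` to every maximal factor of `w` with letters in `{v, v + 1}`;
the accumulator `acc` holds the image of the part of the current factor read so far. -/
def flipRunsAux : List ℕ → List ℕ → List ℕ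
  | acc, [] => acc
  | acc, x :: t =>
    if x = v ∨ x = v + 1 then flipRunsAux (Equiv.swap v (v + 1) x :: acc) t
    else acc ++ x :: flipRunsAux [] t

def flipRuns (w : List ℕ) : List ℕ := flipRunsAux v [] w

variable {v}

theorem revSwap_revSwap (r : List ℕ) : revSwap v (revSwap v r) = r := by
  simp [revSwap, List.map_reverse, Function.comp_def]

theorem mem_of_mem_revSwap {r : List ℕ} (hr : ∀ x ∈ r, x = v ∨ x = v + 1) :
    ∀ x ∈ revSwap v r, x = v ∨ x = v + 1 := by
  simp only [revSwap, List.mem_reverse, List.mem_map, forall_exists_index, and_imp]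
  rintro _ x hx rfl
  rcases hr x hx with rfl | rfl <;> simp

theorem flipRunsAux_append_of_run (acc : List ℕ) {r : List ℕ}
    (hr : ∀ x ∈ r, x = v ∨ x = v + 1) (t : List ℕ) :
    flipRunsAux v acc (r ++ t) = flipRunsAux v (revSwap v r ++ acc) t := by
  induction r generalizing acc with
  | nil => rfl
  | cons x r ih =>
    simp only [List.forall_mem_cons] at hr
    simp [flipRunsAux, hr.1, ih _ hr.2, revSwap]

theorem flipRuns_of_run {r : List ℕ} (hr : ∀ x ∈ r, x = v ∨ x = v + 1) :
    flipRuns v r = revSwap v r := by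
  simpa [flipRuns, flipRunsAux] using flipRunsAux_append_of_run [] hr []

theorem flipRuns_run_append_cons {r : List ℕ} (hr : ∀ x ∈ r, x = v ∨ x = v + 1) {c : ℕ}
    (hc : ¬(c = v ∨ c = v + 1)) (t : List ℕ) :
    flipRuns v (r ++ c :: t) = revSwap v r ++ c :: flipRuns v t := by
  rw [flipRuns, flipRunsAux_append_of_run [] hr, flipRunsAux, if_neg hc, List.append_nil]
  rfl

theorem flipRuns_flipRuns (w : List ℕ) : flipRuns v (flipRuns v w) = w := by
  induction w using List.induction_on_runs (fun x => x = v ∨ x = v + 1) with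
  | run r hr => rw [flipRuns_of_run hr, flipRuns_of_run (mem_of_mem_revSwap hr), revSwap_revSwap]
  | append_cons r c t hr hc ih =>
    rw [flipRuns_run_append_cons hr hc, flipRuns_run_append_cons (mem_of_mem_revSwap hr) hc, ih,
      revSwap_revSwap]

theorem coe_flipRunsAux (acc w : List ℕ) :
    (flipRunsAux v acc w : Multiset ℕ) = acc + (w : Multiset ℕ).map (Equiv.swap v (v + 1)) := by
  induction w generalizing acc with
  | nil => simp [flipRunsAux]
  | cons x t ih =>
    unfold flipRunsAux
    split_ifs with hx
    · rw [ih, ← Multiset.cons_coe, ← Multiset.cons_coe, Multiset.map_cons, Multiset.cons_add,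
        Multiset.add_cons]
    · rw [not_or] at hx
      rw [← Multiset.coe_add, ← Multiset.cons_coe, ih, ← Multiset.cons_coe, Multiset.map_cons,
        Equiv.swap_apply_of_ne_of_ne hx.1 hx.2, Multiset.coe_nil, zero_add]

theorem coe_flipRuns (w : List ℕ) :
    (flipRuns v w : Multiset ℕ) = (w : Multiset ℕ).map (Equiv.swap v (v + 1)) := by
  rw [flipRuns, coe_flipRunsAux, Multiset.coe_nil, zero_add]

theorem desAux_revSwap {r : List ℕ} (hr : ∀ x ∈ r, x = v ∨ x = v + 1) :
    desAux (revSwap v r) = desAux r := by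
  refine desAux_reverse_map fun x hx y hy => ?_
  rcases hr x hx with rfl | rfl <;> rcases hr y hy with rfl | rfl <;> simp

theorem desAux_cons_run_append {s e : ℕ} (hs : ¬(s = v ∨ s = v + 1)) (he : ¬(e = v ∨ e = v + 1))
    {r : List ℕ} (hr : ∀ x ∈ r, x = v ∨ x = v + 1) (hne : r ≠ []) :
    desAux (s :: (r ++ [e])) =
      (if v + 1 < s then 1 else 0) + desAux r + if e < v then 1 else 0 := by
  obtain ⟨a, t, rfl⟩ := List.exists_cons_of_ne_nil hne
  obtain ⟨l, b, hlb⟩ := (List.eq_nil_or_concat' (a :: t)).resolve_left (List.cons_ne_nil a t)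
  have hb : b = v ∨ b = v + 1 := hr b (by simp [hlb])
  have hlast : desAux ((a :: t) ++ [e]) = desAux (a :: t) + if e < v then 1 else 0 := by
    rw [hlb, List.append_assoc, List.singleton_append, desAux_append_pair]
    rcases hb with rfl | rfl <;> split_ifs <;> omega
  have hfirst : desAux (s :: (a :: t ++ [e])) =
      (if v + 1 < s then 1 else 0) + desAux (a :: t ++ [e]) := by
    rw [List.cons_append, desAux]
    rcases hr a (by simp) with rfl | rfl <;> split_ifs <;> omega
  rw [hfirst, hlast, add_assoc]

theorem desAux_cons_revSwap_append {s e : ℕ} (hs : ¬(s = v ∨ s = v + 1))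
    (he : ¬(e = v ∨ e = v + 1)) {r : List ℕ} (hr : ∀ x ∈ r, x = v ∨ x = v + 1) :
    desAux (s :: (revSwap v r ++ [e])) = desAux (s :: (r ++ [e])) := by
  rcases eq_or_ne r [] with rfl | hne
  · rfl
  · rw [desAux_cons_run_append hs he hr hne, desAux_cons_run_append hs he (mem_of_mem_revSwap hr)
      (by simpa [revSwap] using hne), desAux_revSwap hr]

theorem desAux_cons_flipRuns_append {e : ℕ} (he : ¬(e = v ∨ e = v + 1)) (w : List ℕ) {s : ℕ}
    (hs : ¬(s = v ∨ s = v + 1)) :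
    desAux (s :: (flipRuns v w ++ [e])) = desAux (s :: (w ++ [e])) := by
  induction w using List.induction_on_runs (fun x => x = v ∨ x = v + 1) generalizing s with
  | run r hr => rw [flipRuns_of_run hr, desAux_cons_revSwap_append hs he hr]
  | append_cons r c t hr hc ih =>
    rw [flipRuns_run_append_cons hr hc]
    simp only [List.append_assoc, List.cons_append]
    rw [← List.cons_append (a := s), ← List.cons_append (a := s), desAux_append,
      desAux_append (s :: r), List.cons_append, List.cons_append,
      desAux_cons_revSwap_append hs hc hr, ih hc]

theorem des_flipRuns (hv : 0 < v) (w : List ℕ) : des (flipRuns v w) = des w :=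
  desAux_cons_flipRuns_append (by omega) w (by omega)

end FlipRuns

theorem mem_arrangements {M : Multiset ℕ} {w : List ℕ} :
    w ∈ arrangements M ↔ (w : Multiset ℕ) = M := by
  rw [arrangements, List.mem_dedup, List.mem_permutations, ← Multiset.coe_eq_coe,
    Multiset.coe_toList]

theorem nodup_arrangements (M : Multiset ℕ) : (arrangements M).Nodup :=
  List.nodup_dedup _

theorem arrangements_map_perm {f : List ℕ → List ℕ} (hf : Function.Involutive f)
    {σ : ℕ → ℕ} (hσ : Function.Involutive σ)
    (hfσ : ∀ w, (f w : Multiset ℕ) = (w : Multiset ℕ).map σ) (M : Multiset ℕ) :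
    (arrangements (M.map σ)).Perm ((arrangements M).map f) := by
  refine (List.perm_ext_iff_of_nodup (nodup_arrangements _)
    ((nodup_arrangements M).map hf.injective)).mpr fun w => ?_
  simp only [List.mem_map, mem_arrangements]
  constructor
  · intro hw
    refine ⟨f w, ?_, hf w⟩
    rw [hfσ, hw, Multiset.map_map, hσ.comp_self, Multiset.map_id]
  · rintro ⟨u, hu, rfl⟩
    rw [hfσ, hu]

theorem count_succ_msetOf (ms : List ℕ) (i : ℕ) : (msetOf ms).count (i + 1) = ms.getD i 0 := by
  rw [msetOf, Multiset.coe_count, List.count_flatMap, ← List.sum_toFinset _ List.nodup_range]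
  simp only [Function.comp_apply, List.count_replicate, beq_iff_eq, add_left_inj,
    Finset.sum_ite_eq', List.mem_toFinset, List.mem_range]
  split_ifs with h
  · rfl
  · exact (List.getD_eq_default _ _ (not_lt.mp h)).symm

theorem zero_notMem_msetOf (ms : List ℕ) : 0 ∉ msetOf ms := by
  simp [msetOf]

theorem Multiset.count_map_swap {α : Type*} [DecidableEq α] (a b x : α) (M : Multiset α) :
    (M.map (Equiv.swap a b)).count x = M.count (Equiv.swap a b x) := by
  conv_lhs => rw [← Equiv.swap_apply_self a b x]
  exact Multiset.count_map_eq_count' _ _ (Equiv.injective _) _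

theorem msetOf_swap (p q : List ℕ) (a b : ℕ) :
    msetOf (p ++ b :: a :: q) =
      (msetOf (p ++ a :: b :: q)).map (Equiv.swap (p.length + 1) (p.length + 1 + 1)) := by
  ext x
  rw [Multiset.count_map_swap]
  rcases x with _ | i
  · rw [Equiv.swap_apply_of_ne_of_ne (by omega) (by omega)]
    simp [zero_notMem_msetOf]
  · rw [Equiv.swap_apply_def]
    split_ifs with h₁ h₂ <;>
      simp only [count_succ_msetOf, Nat.add_right_cancel_iff] at * <;> subst_vars
    · simp
    · simp
    · rcases lt_or_ge i p.length with hi | hi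
      · rw [List.getD_append _ _ _ _ hi, List.getD_append _ _ _ _ hi]
      · rw [List.getD_append_right _ _ _ _ hi, List.getD_append_right _ _ _ _ hi,
          show i - p.length = i - p.length - 2 + 2 by omega]
        rfl

theorem Auni_swap (p q : List ℕ) (a b : ℕ) : Auni (p ++ b :: a :: q) = Auni (p ++ a :: b :: q) := by
  have hperm := arrangements_map_perm (flipRuns_flipRuns (v := p.length + 1))
    (Equiv.swap_apply_self _ _) coe_flipRuns (msetOf (p ++ a :: b :: q))
  rw [Auni, Auni, msetOf_swap, (hperm.map _).sum_eq, List.map_map]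
  exact congrArg List.sum <| List.map_congr_left fun w _ => by
    simp [des_flipRuns (Nat.succ_pos _)]

theorem Auni_append_perm {l₁ l₂ : List ℕ} (h : l₁.Perm l₂) (p : List ℕ) :
    Auni (p ++ l₁) = Auni (p ++ l₂) := by
  induction h generalizing p with
  | nil => rfl
  | cons x _ ih => simpa using ih (p ++ [x])
  | swap x y l => exact Auni_swap p l x y
  | trans _ _ ih₁ ih₂ => exact (ih₁ p).trans (ih₂ p)

/-- The multiset Eulerian polynomial is invariant under permuting the list of
multiplicities: if `ms'` is a permutation of `ms` then `A_{ms}(x) = A_{ms'}(x)`. -/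
theorem Auni_perm_invariant (ms ms' : List ℕ) (h : ms.Perm ms') :
    Auni ms = Auni ms' :=
  Auni_append_perm h []
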